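/- arXiv:2006.08163 — 3 statements merged into one kernel-verified Lean document; each statement's English description precedes it below -/
import Mathlib

section
/- For all real numbers a, the integral over the real line of log(1 + a^2/x^2) dx equals 2π|a|. -/
/-! The integrand is even, so the integral is twice the integral over `(0, ∞)`. There, for
`b > 0`, integration by parts gives the antiderivative
`F x = x log (1 + b²/x²) + 2 b arctan (x / b)`. It extends continuously to `F 0 = 0`, because
`x log x → 0`, and `F x → π b` at infinity, because `0 ≤ x log (1 + b²/x²) ≤ b²/x`. -/

open MeasureTheory Real Set Filter Topology

lemma log_one_add_sq_div_sq_nonneg (b x : ℝ) : 0 ≤ log (1 + b ^ 2 / x ^ 2) :=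
  log_nonneg (le_add_of_nonneg_right (by positivity))

lemma continuous_mul_log_one_add_sq_div_sq {b : ℝ} (hb : b ≠ 0) :
    Continuous fun x : ℝ => x * log (1 + b ^ 2 / x ^ 2) := by
  have key : (fun x : ℝ => x * log (1 + b ^ 2 / x ^ 2)) =
      fun x => x * log (x ^ 2 + b ^ 2) - 2 * (x * log x) := by
    funext x
    rcases eq_or_ne x 0 with rfl | hx
    · simp
    rw [show 1 + b ^ 2 / x ^ 2 = (x ^ 2 + b ^ 2) / x ^ 2 by field_simp,
      log_div (by positivity) (pow_ne_zero 2 hx), log_pow]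
    push_cast
    ring
  have hlog : Continuous fun x : ℝ => log (x ^ 2 + b ^ 2) :=
    ((continuous_pow 2).add continuous_const).log fun x =>
      (add_pos_of_nonneg_of_pos (sq_nonneg x) (sq_pos_of_ne_zero hb)).ne'
  rw [key]
  exact (continuous_id.mul hlog).sub (continuous_mul_log.const_mul 2)

lemma tendsto_mul_log_one_add_sq_div_sq_atTop (b : ℝ) :
    Tendsto (fun x : ℝ => x * log (1 + b ^ 2 / x ^ 2)) atTop (𝓝 0) := by
  refine squeeze_zero' ?_ ?_
    (tendsto_const_nhds.div_atTop tendsto_id : Tendsto (fun x : ℝ => b ^ 2 / x) _ _)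
  · filter_upwards [eventually_ge_atTop 0] with x hx
    exact mul_nonneg hx (log_one_add_sq_div_sq_nonneg b x)
  · filter_upwards [eventually_gt_atTop 0] with x hx
    calc x * log (1 + b ^ 2 / x ^ 2) ≤ x * (b ^ 2 / x ^ 2) := by
          gcongr
          linarith [log_le_sub_one_of_pos (x := 1 + b ^ 2 / x ^ 2) (by positivity)]
      _ = b ^ 2 / x := by field_simp

noncomputable def logOneAddSqDivSqAntideriv (b x : ℝ) : ℝ :=
  x * log (1 + b ^ 2 / x ^ 2) + 2 * b * arctan (x / b)

lemma hasDerivAt_logOneAddSqDivSqAntideriv {b x : ℝ} (hb : b ≠ 0) (hx : x ≠ 0) :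
    HasDerivAt (logOneAddSqDivSqAntideriv b) (log (1 + b ^ 2 / x ^ 2)) x := by
  have hinner :=
    ((hasDerivAt_const x (b ^ 2)).div (hasDerivAt_pow 2 x) (pow_ne_zero 2 hx)).const_add 1
  have hlog := hinner.log (by positivity : (1:ℝ) + b ^ 2 / x ^ 2 ≠ 0)
  have H := ((hasDerivAt_id x).mul hlog).add
    (((hasDerivAt_id x).div_const b).arctan.const_mul (2 * b))
  refine (H : HasDerivAt (logOneAddSqDivSqAntideriv b) _ x).congr_deriv ?_
  simp only [Pi.div_apply, id]
  field_simp
  ring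

lemma continuous_logOneAddSqDivSqAntideriv {b : ℝ} (hb : b ≠ 0) :
    Continuous (logOneAddSqDivSqAntideriv b) :=
  (continuous_mul_log_one_add_sq_div_sq hb).add
    (continuous_const.mul (continuous_arctan.comp (continuous_id.div_const b)))

lemma tendsto_logOneAddSqDivSqAntideriv_atTop {b : ℝ} (hb : 0 < b) :
    Tendsto (logOneAddSqDivSqAntideriv b) atTop (𝓝 (π * b)) := by
  have harctan : Tendsto (fun x : ℝ => arctan (x / b)) atTop (𝓝 (π / 2)) :=
    (tendsto_arctan_atTop.mono_right nhdsWithin_le_nhds).comp (tendsto_id.atTop_div_const hb)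
  rw [show π * b = 0 + 2 * b * (π / 2) by ring]
  exact (tendsto_mul_log_one_add_sq_div_sq_atTop b).add (harctan.const_mul (2 * b))

lemma integral_Ioi_log_one_add_sq_div_sq {b : ℝ} (hb : 0 < b) :
    ∫ x in Ioi 0, log (1 + b ^ 2 / x ^ 2) = π * b := by
  rw [integral_Ioi_of_hasDerivAt_of_nonneg
    (continuous_logOneAddSqDivSqAntideriv hb.ne').continuousWithinAt
    (fun x hx => hasDerivAt_logOneAddSqDivSqAntideriv hb.ne' (ne_of_gt hx))
    (fun x _ => log_one_add_sq_div_sq_nonneg b x) (tendsto_logOneAddSqDivSqAntideriv_atTop hb)]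
  simp [logOneAddSqDivSqAntideriv]

/-- For all real numbers `a`, the integral over the real line of
`log (1 + a² / x²)` equals `2 π |a|`. -/
theorem integral_log_one_add_sq_div_sq (a : ℝ) :
    ∫ x : ℝ, Real.log (1 + a ^ 2 / x ^ 2) = 2 * Real.pi * |a| := by
  rcases eq_or_ne a 0 with rfl | ha
  · simp
  calc ∫ x : ℝ, log (1 + a ^ 2 / x ^ 2) = ∫ x : ℝ, log (1 + |a| ^ 2 / |x| ^ 2) := by
        simp only [sq_abs]
    _ = 2 * ∫ x in Ioi 0, log (1 + |a| ^ 2 / x ^ 2) :=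
        integral_comp_abs (f := fun x => log (1 + |a| ^ 2 / x ^ 2))
    _ = 2 * π * |a| := by
        rw [integral_Ioi_log_one_add_sq_div_sq (abs_pos.mpr ha)]
        ring
end

section
/- For all real numbers a and b, the integral over the real line of log((x^2 + a^2)/(x^2 + b^2)) dx equals 2π(|a| - |b|). -/
/-!
`F_c(x) = x log (x² + c²) + 2c arctan (x / c)` is a primitive of `log (x² + c²) + 2`. For
`0 ≤ b ≤ a` the integrand `log ((x² + a²) / (x² + b²))` is nonnegative, so `F_a - F_b`, which
vanishes at `0` and tends to `π (a - b)` at infinity (because `x log (1 + t / x²) → 0`), computes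
its integral over `(0, ∞)` without a separate integrability argument. The integrand is even in
`x`, `a` and `b`, and changes sign when `a` and `b` are swapped.
-/

open MeasureTheory Real Filter Topology Set

noncomputable def logSqAddSqPrimitive (c x : ℝ) : ℝ :=
  x * log (x ^ 2 + c ^ 2) + 2 * (c * arctan (x / c))

-- For `c = 0` the function and the claimed derivative both vanish, as `x / 0 = 0`.
lemma hasDerivAt_mul_arctan_div (c x : ℝ) :
    HasDerivAt (fun x ↦ c * arctan (x / c)) (c ^ 2 / (x ^ 2 + c ^ 2)) x := by
  rcases eq_or_ne c 0 with rfl | hc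
  · simpa using hasDerivAt_const x (0 : ℝ)
  refine (((hasDerivAt_arctan (x / c)).comp x
    ((hasDerivAt_id' x).div_const c)).const_mul c).congr_deriv ?_
  field_simp
  ring

lemma hasDerivAt_mul_log_sq_add_sq {c x : ℝ} (h : x ^ 2 + c ^ 2 ≠ 0) :
    HasDerivAt (fun x ↦ x * log (x ^ 2 + c ^ 2))
      (log (x ^ 2 + c ^ 2) + 2 * x ^ 2 / (x ^ 2 + c ^ 2)) x := by
  have hlog : HasDerivAt (fun x ↦ log (x ^ 2 + c ^ 2)) (2 * x / (x ^ 2 + c ^ 2)) x := by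
    simpa using ((hasDerivAt_pow 2 x).add_const (c ^ 2)).log h
  refine ((hasDerivAt_id' x).mul hlog).congr_deriv ?_
  ring

lemma hasDerivAt_logSqAddSqPrimitive {c x : ℝ} (h : x ^ 2 + c ^ 2 ≠ 0) :
    HasDerivAt (logSqAddSqPrimitive c) (log (x ^ 2 + c ^ 2) + 2) x := by
  refine ((hasDerivAt_mul_log_sq_add_sq h).add
    ((hasDerivAt_mul_arctan_div c x).const_mul 2)).congr_deriv ?_
  field_simp
  ring

lemma continuous_mul_log_sq_add_sq (c : ℝ) :
    Continuous fun x : ℝ ↦ x * log (x ^ 2 + c ^ 2) := by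
  rcases eq_or_ne c 0 with rfl | hc
  · convert continuous_mul_log.const_mul 2 using 2 with x
    rw [zero_pow two_ne_zero, add_zero, log_pow]
    push_cast
    ring
  · exact continuous_id.mul <| by
      refine Continuous.log (by fun_prop) fun x ↦ ?_
      positivity

lemma continuous_logSqAddSqPrimitive (c : ℝ) : Continuous (logSqAddSqPrimitive c) :=
  (continuous_mul_log_sq_add_sq c).add <| by fun_prop

lemma tendsto_mul_log_one_add_div_sq_atTop (c : ℝ) :
    Tendsto (fun x : ℝ ↦ x * log (1 + c / x ^ 2)) atTop (𝓝 0) := by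
  have h := tendsto_inv_atTop_zero.mul
    ((tendsto_mul_log_one_add_div_atTop c).comp (tendsto_pow_atTop two_ne_zero))
  rw [zero_mul] at h
  refine h.congr' ?_
  filter_upwards [eventually_gt_atTop 0] with x hx
  simp only [Function.comp_apply]
  field_simp

lemma tendsto_mul_log_sq_add_sq_sub_atTop (a b : ℝ) :
    Tendsto (fun x : ℝ ↦ x * log (x ^ 2 + a ^ 2) - x * log (x ^ 2 + b ^ 2)) atTop (𝓝 0) := by
  have h := (tendsto_mul_log_one_add_div_sq_atTop (a ^ 2)).sub
    (tendsto_mul_log_one_add_div_sq_atTop (b ^ 2))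
  rw [sub_zero] at h
  refine h.congr' ?_
  filter_upwards [eventually_gt_atTop 0] with x hx
  have factor (c : ℝ) : log (x ^ 2 + c ^ 2) = log (x ^ 2) + log (1 + c ^ 2 / x ^ 2) := by
    rw [← log_mul (by positivity) (by positivity)]
    congr 1
    field_simp
  rw [factor a, factor b]
  ring

lemma tendsto_mul_arctan_div_atTop {c : ℝ} (hc : 0 ≤ c) :
    Tendsto (fun x ↦ c * arctan (x / c)) atTop (𝓝 (c * (π / 2))) := by
  rcases hc.eq_or_lt with rfl | hc
  · simp
  · exact ((tendsto_arctan_atTop.mono_right nhdsWithin_le_nhds).comp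
      (tendsto_id.atTop_div_const hc)).const_mul c

lemma tendsto_logSqAddSqPrimitive_sub_atTop {a b : ℝ} (ha : 0 ≤ a) (hb : 0 ≤ b) :
    Tendsto (fun x ↦ logSqAddSqPrimitive a x - logSqAddSqPrimitive b x) atTop
      (𝓝 (π * (a - b))) := by
  have h := (tendsto_mul_log_sq_add_sq_sub_atTop a b).add
    (((tendsto_mul_arctan_div_atTop ha).sub (tendsto_mul_arctan_div_atTop hb)).const_mul 2)
  convert h using 1
  · ext x
    simp only [logSqAddSqPrimitive]
    ring
  · congr 1
    ring

lemma integral_Ioi_log_div_sq_add_sq {a b : ℝ} (hb : 0 ≤ b) (hba : b ≤ a) :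
    ∫ x in Ioi (0 : ℝ), log ((x ^ 2 + a ^ 2) / (x ^ 2 + b ^ 2)) = π * (a - b) := by
  have hderiv (x : ℝ) (hx : x ∈ Ioi 0) :
      HasDerivAt (fun x ↦ logSqAddSqPrimitive a x - logSqAddSqPrimitive b x)
        (log ((x ^ 2 + a ^ 2) / (x ^ 2 + b ^ 2))) x := by
    have hx : 0 < x := hx
    rw [log_div (by positivity) (by positivity)]
    refine ((hasDerivAt_logSqAddSqPrimitive (c := a) (x := x) (by positivity)).sub
      (hasDerivAt_logSqAddSqPrimitive (c := b) (x := x) (by positivity))).congr_deriv ?_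
    ring
  have hnonneg (x : ℝ) (hx : x ∈ Ioi 0) : 0 ≤ log ((x ^ 2 + a ^ 2) / (x ^ 2 + b ^ 2)) := by
    have hx : 0 < x := hx
    have : b ^ 2 ≤ a ^ 2 := pow_le_pow_left₀ hb hba 2
    exact log_nonneg <| (one_le_div (by positivity)).2 (by linarith)
  rw [integral_Ioi_of_hasDerivAt_of_nonneg
    ((continuous_logSqAddSqPrimitive a).sub (continuous_logSqAddSqPrimitive b)).continuousWithinAt
    hderiv hnonneg (tendsto_logSqAddSqPrimitive_sub_atTop (hb.trans hba) hb)]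
  simp [logSqAddSqPrimitive]

/-- For all real numbers `a` and `b`, the integral over the real line of
`log ((x² + a²) / (x² + b²))` equals `2 π (|a| - |b|)`. -/
theorem integral_log_ratio (a b : ℝ) :
    ∫ x : ℝ, Real.log ((x ^ 2 + a ^ 2) / (x ^ 2 + b ^ 2)) = 2 * Real.pi * (|a| - |b|) := by
  wlog hab : |b| ≤ |a| with H
  · have swap (x : ℝ) : log ((x ^ 2 + a ^ 2) / (x ^ 2 + b ^ 2)) =
        -log ((x ^ 2 + b ^ 2) / (x ^ 2 + a ^ 2)) := by
      rw [← log_inv, inv_div]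
    simp_rw [swap, integral_neg, H b a (le_of_not_ge hab)]
    ring
  have heven (x : ℝ) : log ((x ^ 2 + a ^ 2) / (x ^ 2 + b ^ 2)) =
      log ((|x| ^ 2 + |a| ^ 2) / (|x| ^ 2 + |b| ^ 2)) := by
    simp only [sq_abs]
  simp_rw [heven, integral_comp_abs (f := fun x ↦ log ((x ^ 2 + |a| ^ 2) / (x ^ 2 + |b| ^ 2))),
    integral_Ioi_log_div_sq_add_sq (abs_nonneg b) hab]
  ring
end

section
/- Cubic term identity: for φ ∈ 𝒮(ℝ), (1/(6π)) ∂ₓ ∫_ℝ (φ(x) - φ(x+ζ))³/ζ² dζ = (1/2)∂ₓ{φ²|∂ₓ|φ - φ|∂ₓ|φ² + (1/3)|∂ₓ|φ³}. -/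
/-!
Fold the integral onto `(0, ∞)`. With `a = φ x`, `b = φ (x - y)`, `c = φ (x + y)`,
`(a - b)³ + (a - c)³ = 3a²(2a - b - c) - 3a(2a² - b² - c²) + (2a³ - b³ - c³)`,
a combination of the symmetric second differences of `φ`, `φ²` and `φ³`, which are again
Schwartz functions. For a bounded `f` with bounded second derivative, integrating the truncated
principal value `∫_{ε ≤ |y| ≤ 1/ε} f'(x - y) / y` by parts against `2 f x - f (x - y) - f (x + y)`
gives `|∂ₓ| f x = π⁻¹ ∫₀^∞ (2 f x - f (x - y) - f (x + y)) / y² dy`: the second difference is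
`O(y²)` at `0` and bounded at `∞`, so the boundary terms vanish as `ε → 0`. Hence the identity
already holds before differentiating in `x`.
-/

open MeasureTheory Filter

/-- The truncated principal-value Hilbert transform. -/
noncomputable def hilbertT {E : Type*} [NormedAddCommGroup E] [NormedSpace ℝ E]
    (f : ℝ → E) (x : ℝ) : E :=
  limUnder (nhdsWithin 0 (Set.Ioi (0 : ℝ)))
    (fun ε : ℝ => (Real.pi)⁻¹ • ∫ y in {y : ℝ | ε ≤ |y| ∧ |y| ≤ ε⁻¹}, y⁻¹ • f (x - y))

/-- The operator `|∂ₓ| = H ∂ₓ`, the Fourier multiplier with symbol `|ξ|`. -/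
noncomputable def absDeriv (f : ℝ → ℝ) (x : ℝ) : ℝ := hilbertT (deriv f) x

open Set Topology
open scoped SchwartzMap

section RealIntegrals

variable {E : Type*} [NormedAddCommGroup E] [NormedSpace ℝ E]

theorem setOf_abs_mem_Icc_eq_union {a b : ℝ} (ha : 0 < a) :
    {y : ℝ | a ≤ |y| ∧ |y| ≤ b} = Icc (-b) (-a) ∪ Icc a b := by
  ext y
  simp only [mem_ofPred_eq, mem_union, mem_Icc, le_abs, abs_le]
  constructor
  · rintro ⟨h1 | h1, h2, h3⟩
    · exact Or.inr ⟨h1, h3⟩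
    · exact Or.inl ⟨h2, by linarith⟩
  · rintro (⟨h1, h2⟩ | ⟨h1, h2⟩)
    · exact ⟨Or.inr (by linarith), h1, by linarith⟩
    · exact ⟨Or.inl h1, by linarith, h2⟩

theorem setIntegral_abs_mem_Icc {F : ℝ → E} {a b : ℝ} (ha : 0 < a) (hab : a ≤ b)
    (hF : IntegrableOn F {y : ℝ | a ≤ |y| ∧ |y| ≤ b}) :
    ∫ y in {y : ℝ | a ≤ |y| ∧ |y| ≤ b}, F y = ∫ y in a..b, (F y + F (-y)) := by
  rw [setOf_abs_mem_Icc_eq_union ha] at hF ⊢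
  have hneg : IntervalIntegrable F volume (-b) (-a) :=
    (intervalIntegrable_iff_integrableOn_Icc_of_le (neg_le_neg hab)).2
      (hF.mono_set subset_union_left)
  have hpos : IntervalIntegrable F volume a b :=
    (intervalIntegrable_iff_integrableOn_Icc_of_le hab).2 (hF.mono_set subset_union_right)
  have hdisj : Disjoint (Icc (-b) (-a)) (Icc a b) :=
    Set.disjoint_left.2 fun y h1 h2 => by linarith [h1.2, h2.1]
  rw [setIntegral_union hdisj measurableSet_Icc (hF.mono_set subset_union_left)
    (hF.mono_set subset_union_right), integral_Icc_eq_integral_Ioc, integral_Icc_eq_integral_Ioc,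
    ← intervalIntegral.integral_of_le (neg_le_neg hab), ← intervalIntegral.integral_of_le hab,
    ← intervalIntegral.integral_comp_neg, add_comm, intervalIntegral.integral_add hpos]
  simpa only [neg_neg] using (IntervalIntegrable.iff_comp_neg).mp hneg.symm

theorem integral_eq_integral_Ioi_add_comp_neg {g : ℝ → E} (hg : Integrable g) :
    ∫ x, g x = ∫ x in Ioi 0, (g x + g (-x)) := by
  rw [integral_add hg.integrableOn hg.comp_neg.integrableOn, add_comm,
    integral_comp_neg_Ioi, neg_zero,
    intervalIntegral.integral_Iic_add_Ioi hg.integrableOn hg.integrableOn]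

end RealIntegrals

theorem integrable_div_sq_of_abs_le {g : ℝ → ℝ} {A B : ℝ} (hg : AEStronglyMeasurable g)
    (hA : ∀ y, |y| ≤ 1 → |g y| ≤ A * y ^ 2) (hB : ∀ y, |g y| ≤ B) :
    Integrable fun y => g y / y ^ 2 := by
  have hA0 : 0 ≤ A := by simpa using (abs_nonneg _).trans (hA 1 (by norm_num))
  have hB0 : 0 ≤ B := (abs_nonneg _).trans (hB 0)
  refine (integrable_inv_one_add_sq.const_mul (2 * (A + B))).mono'
    (hg.aemeasurable.div (measurable_id.pow_const 2).aemeasurable).aestronglyMeasurable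
    (ae_of_all _ fun y => ?_)
  rcases eq_or_ne y 0 with rfl | hy
  · simp; positivity
  have hy2 : 0 < y ^ 2 := by positivity
  rw [Real.norm_eq_abs, abs_div, abs_of_pos hy2, div_le_iff₀ hy2, ← div_eq_mul_inv,
    div_mul_eq_mul_div, le_div_iff₀ (by positivity)]
  rcases le_total |y| 1 with h | h
  · have : y ^ 2 ≤ 1 := by nlinarith [sq_abs y, abs_nonneg y]
    nlinarith [hA y h, abs_nonneg (g y)]
  · have : 1 ≤ y ^ 2 := by nlinarith [sq_abs y, abs_nonneg y]
    nlinarith [hB y, abs_nonneg (g y)]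

theorem abs_sub_le_of_hasDerivAt {f f' : ℝ → ℝ} {M : ℝ} (hf : ∀ t, HasDerivAt f (f' t) t)
    (hM : ∀ t, |f' t| ≤ M) (a b : ℝ) : |f a - f b| ≤ M * |a - b| :=
  convex_univ.norm_image_sub_le_of_norm_hasDerivWithin_le (fun t _ => (hf t).hasDerivWithinAt)
    (fun t _ => hM t) (mem_univ b) (mem_univ a)

def secondDiff (f : ℝ → ℝ) (x y : ℝ) : ℝ := 2 * f x - f (x - y) - f (x + y)

section SecondDiff

variable {f f' f'' : ℝ → ℝ}

theorem hasDerivAt_secondDiff (hf : ∀ t, HasDerivAt f (f' t) t) (x y : ℝ) :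
    HasDerivAt (secondDiff f x) (f' (x - y) - f' (x + y)) y := by
  have hsub := (hf (x - y)).comp y ((hasDerivAt_id y).const_sub x)
  have hadd := (hf (x + y)).comp y ((hasDerivAt_id y).const_add x)
  exact (((hasDerivAt_const y (2 * f x)).sub hsub).sub hadd).congr_deriv (by ring)

theorem continuous_secondDiff (hf : Continuous f) (x : ℝ) : Continuous (secondDiff f x) := by
  unfold secondDiff; fun_prop

theorem abs_secondDiff_le {M : ℝ} (hM : ∀ t, |f t| ≤ M) (x y : ℝ) :
    |secondDiff f x y| ≤ 4 * M := by
  have := abs_le.1 (hM x); have := abs_le.1 (hM (x - y)); have := abs_le.1 (hM (x + y))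
  rw [secondDiff, abs_le]; constructor <;> linarith

theorem abs_secondDiff_le_sq (hf : ∀ t, HasDerivAt f (f' t) t) (hf' : ∀ t, HasDerivAt f' (f'' t) t)
    {M : ℝ} (hM : ∀ t, |f'' t| ≤ M) (x y : ℝ) : |secondDiff f x y| ≤ 2 * M * y ^ 2 := by
  have hderiv : ∀ t ∈ uIcc 0 y, |f' (x - t) - f' (x + t)| ≤ 2 * M * |y| := fun t ht => by
    have hty : |t| ≤ |y| := by simpa using abs_sub_left_of_mem_uIcc ht
    calc |f' (x - t) - f' (x + t)| ≤ M * |(x - t) - (x + t)| := abs_sub_le_of_hasDerivAt hf' hM _ _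
      _ = 2 * M * |t| := by rw [show (x - t) - (x + t) = -2 * t by ring, abs_mul]; norm_num; ring
      _ ≤ 2 * M * |y| := by gcongr; linarith [(abs_nonneg _).trans (hM 0)]
  have := (convex_uIcc 0 y).norm_image_sub_le_of_norm_hasDerivWithin_le
    (fun t _ => (hasDerivAt_secondDiff hf x t).hasDerivWithinAt) hderiv left_mem_uIcc right_mem_uIcc
  have hG0 : secondDiff f x 0 = 0 := by simp [secondDiff]; ring
  rw [hG0, sub_zero, sub_zero, Real.norm_eq_abs, Real.norm_eq_abs] at this
  calc |secondDiff f x y| ≤ 2 * M * |y| * |y| := this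
    _ = 2 * M * y ^ 2 := by rw [mul_assoc, ← sq, sq_abs]

theorem setIntegral_inv_smul_deriv_eq_secondDiff (hf : ∀ t, HasDerivAt f (f' t) t)
    (hf'c : Continuous f') (x : ℝ) {ε : ℝ} (hε : 0 < ε) (hε1 : ε ≤ 1) :
    ∫ y in {y : ℝ | ε ≤ |y| ∧ |y| ≤ ε⁻¹}, y⁻¹ • f' (x - y) =
      ε * secondDiff f x ε⁻¹ - ε⁻¹ * secondDiff f x ε +
        ∫ y in ε..ε⁻¹, secondDiff f x y / y ^ 2 := by
  have hεε : ε ≤ ε⁻¹ := hε1.trans ((one_le_inv₀ hε).2 hε1)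
  have hfc : Continuous f := continuous_iff_continuousAt.2 fun t => (hf t).continuousAt
  have hne : ∀ y ∈ uIcc ε ε⁻¹, y ≠ 0 := fun y hy =>
    (hε.trans_le (uIcc_of_le hεε ▸ hy).1).ne'
  have hint : IntegrableOn (fun y => y⁻¹ • f' (x - y)) {y : ℝ | ε ≤ |y| ∧ |y| ≤ ε⁻¹} := by
    refine ContinuousOn.integrableOn_compact ?_ ?_
    · rw [setOf_abs_mem_Icc_eq_union hε]; exact isCompact_Icc.union isCompact_Icc
    · refine (continuousOn_inv₀.mono fun y hy => ?_).smul (by fun_prop)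
      exact abs_ne_zero.1 (hε.trans_le hy.1).ne'
  have hibp := intervalIntegral.integral_mul_deriv_eq_deriv_mul_of_hasDerivAt
    (u := fun y => y⁻¹) (u' := fun y => -(y ^ 2)⁻¹) (v' := fun y => f' (x - y) - f' (x + y))
    (continuousOn_inv₀.mono hne) (continuous_secondDiff hfc x).continuousOn
    (fun y hy => hasDerivAt_inv (hne y (Ioo_subset_Icc_self hy)))
    (fun y _ => hasDerivAt_secondDiff hf x y)
    ((continuous_pow 2).continuousOn.inv₀ fun y hy => pow_ne_zero 2 (hne y hy)).neg.intervalIntegrable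
    ((by fun_prop : Continuous fun y => f' (x - y) - f' (x + y)).intervalIntegrable _ _)
  calc ∫ y in {y : ℝ | ε ≤ |y| ∧ |y| ≤ ε⁻¹}, y⁻¹ • f' (x - y)
      = ∫ y in ε..ε⁻¹, y⁻¹ * (f' (x - y) - f' (x + y)) := by
        rw [setIntegral_abs_mem_Icc hε hεε hint]
        refine intervalIntegral.integral_congr fun y _ => ?_
        simp only [smul_eq_mul, sub_neg_eq_add, inv_neg]
        ring
    _ = ε * secondDiff f x ε⁻¹ - ε⁻¹ * secondDiff f x ε +
          ∫ y in ε..ε⁻¹, secondDiff f x y / y ^ 2 := by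
        rw [hibp, inv_inv, sub_eq_add_neg (_ - _), ← intervalIntegral.integral_neg]
        congr 1
        exact intervalIntegral.integral_congr fun y _ => by ring

theorem integrable_secondDiff_div_sq (hf : ∀ t, HasDerivAt f (f' t) t)
    (hf' : ∀ t, HasDerivAt f' (f'' t) t) {M₀ M₂ : ℝ} (h₀ : ∀ t, |f t| ≤ M₀)
    (h₂ : ∀ t, |f'' t| ≤ M₂) (x : ℝ) : Integrable fun y => secondDiff f x y / y ^ 2 :=
  integrable_div_sq_of_abs_le
    (continuous_secondDiff (continuous_iff_continuousAt.2 fun t => (hf t).continuousAt)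
      x).aestronglyMeasurable
    (fun y _ => abs_secondDiff_le_sq hf hf' h₂ x y) (abs_secondDiff_le h₀ x)

theorem tendsto_setIntegral_inv_smul_deriv (hf : ∀ t, HasDerivAt f (f' t) t)
    (hf' : ∀ t, HasDerivAt f' (f'' t) t) {M₀ M₂ : ℝ} (h₀ : ∀ t, |f t| ≤ M₀)
    (h₂ : ∀ t, |f'' t| ≤ M₂) (x : ℝ) :
    Tendsto (fun ε => ∫ y in {y : ℝ | ε ≤ |y| ∧ |y| ≤ ε⁻¹}, y⁻¹ • f' (x - y)) (𝓝[>] 0)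
      (𝓝 (∫ y in Ioi 0, secondDiff f x y / y ^ 2)) := by
  have hint := integrable_secondDiff_div_sq hf hf' h₀ h₂ x
  have hout : Tendsto (fun ε => ε * secondDiff f x ε⁻¹) (𝓝[>] 0) (𝓝 0) :=
    (tendsto_nhdsWithin_of_tendsto_nhds tendsto_id).zero_mul_isBoundedUnder_le
      (isBoundedUnder_of ⟨4 * M₀, fun ε => abs_secondDiff_le h₀ x _⟩)
  have hin : Tendsto (fun ε => ε⁻¹ * secondDiff f x ε) (𝓝[>] 0) (𝓝 0) := by
    have hlin : Tendsto (fun ε : ℝ => 2 * M₂ * ε) (𝓝[>] 0) (𝓝 0) := by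
      simpa using ((continuous_const_mul (2 * M₂)).tendsto' 0 0 (mul_zero _)).mono_left
        nhdsWithin_le_nhds
    refine squeeze_zero_norm' ?_ hlin
    filter_upwards [self_mem_nhdsWithin] with ε (hε : 0 < ε)
    rw [Real.norm_eq_abs, abs_mul, abs_inv, abs_of_pos hε, inv_mul_le_iff₀ hε]
    simpa [pow_two, mul_comm, mul_left_comm, mul_assoc] using abs_secondDiff_le_sq hf hf' h₂ x ε
  have htail : Tendsto (fun ε => ∫ y in 0..ε⁻¹, secondDiff f x y / y ^ 2) (𝓝[>] 0)
      (𝓝 (∫ y in Ioi 0, secondDiff f x y / y ^ 2)) :=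
    intervalIntegral_tendsto_integral_Ioi 0 hint.integrableOn tendsto_inv_nhdsGT_zero
  have hhead : Tendsto (fun ε => ∫ y in 0..ε, secondDiff f x y / y ^ 2) (𝓝[>] 0) (𝓝 0) := by
    have := (intervalIntegral.continuous_primitive (fun _ _ => hint.intervalIntegrable) 0).tendsto 0
    simpa using this.mono_left nhdsWithin_le_nhds
  have hsum := (hout.sub hin).add (htail.sub hhead)
  rw [sub_zero, zero_add, sub_zero] at hsum
  refine hsum.congr' ?_
  filter_upwards [Ioc_mem_nhdsGT one_pos] with ε hε
  rw [setIntegral_inv_smul_deriv_eq_secondDiff hf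
      (continuous_iff_continuousAt.2 fun t => (hf' t).continuousAt) x hε.1 hε.2,
    intervalIntegral.integral_interval_sub_left hint.intervalIntegrable hint.intervalIntegrable]

theorem absDeriv_eq_integral_secondDiff (hf : ∀ t, HasDerivAt f (f' t) t)
    (hf' : ∀ t, HasDerivAt f' (f'' t) t) {M₀ M₂ : ℝ} (h₀ : ∀ t, |f t| ≤ M₀)
    (h₂ : ∀ t, |f'' t| ≤ M₂) (x : ℝ) :
    absDeriv f x = Real.pi⁻¹ * ∫ y in Ioi 0, secondDiff f x y / y ^ 2 := by
  rw [absDeriv, hilbertT, funext fun t => (hf t).deriv]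
  exact ((tendsto_setIntegral_inv_smul_deriv hf hf' h₀ h₂ x).const_smul _).limUnder_eq

end SecondDiff

theorem integrable_pow_sub_div_sq {f f' : ℝ → ℝ} (hf : ∀ t, HasDerivAt f (f' t) t)
    {M₀ M₁ : ℝ} (h₀ : ∀ t, |f t| ≤ M₀) (h₁ : ∀ t, |f' t| ≤ M₁) {n : ℕ} (hn : 2 ≤ n) (x : ℝ) :
    Integrable fun y => (f x - f (x + y)) ^ n / y ^ 2 := by
  have hfc : Continuous f := continuous_iff_continuousAt.2 fun t => (hf t).continuousAt
  have hM₁ : 0 ≤ M₁ := (abs_nonneg _).trans (h₁ 0)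
  refine integrable_div_sq_of_abs_le (A := M₁ ^ n) (B := (2 * M₀) ^ n)
    (by fun_prop : Continuous fun y => (f x - f (x + y)) ^ n).aestronglyMeasurable
    (fun y hy => ?_) (fun y => ?_)
  · have hlip : |f x - f (x + y)| ≤ M₁ * |y| := by
      simpa using abs_sub_le_of_hasDerivAt hf h₁ x (x + y)
    calc |(f x - f (x + y)) ^ n| ≤ (M₁ * |y|) ^ n := by
          rw [abs_pow]; gcongr
      _ = M₁ ^ n * |y| ^ n := mul_pow _ _ _
      _ ≤ M₁ ^ n * y ^ 2 := by
          rw [← sq_abs y]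
          exact mul_le_mul_of_nonneg_left (pow_le_pow_of_le_one (abs_nonneg y) hy hn)
            (by positivity)
  · have := abs_le.1 (h₀ x); have := abs_le.1 (h₀ (x + y))
    rw [abs_pow]
    exact pow_le_pow_left₀ (abs_nonneg _) (abs_le.2 ⟨by linarith, by linarith⟩) n

namespace SchwartzMap

theorem abs_le_seminorm (ψ : 𝓢(ℝ, ℝ)) (t : ℝ) : |ψ t| ≤ SchwartzMap.seminorm ℝ 0 0 ψ :=
  norm_le_seminorm ℝ ψ t

theorem hasDerivAt_derivCLM (ψ : 𝓢(ℝ, ℝ)) (t : ℝ) : HasDerivAt ψ (derivCLM ℝ ℝ ψ t) t := by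
  rw [derivCLM_apply]; exact ψ.hasDerivAt t

theorem integrable_secondDiff_div_sq (ψ : 𝓢(ℝ, ℝ)) (x : ℝ) :
    Integrable fun y => secondDiff ψ x y / y ^ 2 :=
  _root_.integrable_secondDiff_div_sq ψ.hasDerivAt_derivCLM (derivCLM ℝ ℝ ψ).hasDerivAt_derivCLM
    ψ.abs_le_seminorm (derivCLM ℝ ℝ (derivCLM ℝ ℝ ψ)).abs_le_seminorm x

theorem absDeriv_eq_integral_secondDiff (ψ : 𝓢(ℝ, ℝ)) (x : ℝ) :
    absDeriv ψ x = Real.pi⁻¹ * ∫ y in Ioi 0, secondDiff ψ x y / y ^ 2 :=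
  _root_.absDeriv_eq_integral_secondDiff ψ.hasDerivAt_derivCLM
    (derivCLM ℝ ℝ ψ).hasDerivAt_derivCLM ψ.abs_le_seminorm
    (derivCLM ℝ ℝ (derivCLM ℝ ℝ ψ)).abs_le_seminorm x

theorem integrable_pow_sub_div_sq (φ : 𝓢(ℝ, ℝ)) {n : ℕ} (hn : 2 ≤ n) (x : ℝ) :
    Integrable fun y => (φ x - φ (x + y)) ^ n / y ^ 2 :=
  _root_.integrable_pow_sub_div_sq φ.hasDerivAt_derivCLM φ.abs_le_seminorm
    (derivCLM ℝ ℝ φ).abs_le_seminorm hn x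

theorem exists_coe_eq_pow {D : Type*} [NormedAddCommGroup D] [NormedSpace ℝ D] (φ : 𝓢(D, ℝ))
    {n : ℕ} (hn : n ≠ 0) : ∃ ψ : 𝓢(D, ℝ), ⇑ψ = fun x => φ x ^ n := by
  induction n with
  | zero => exact absurd rfl hn
  | succ n ih =>
    rcases eq_or_ne n 0 with rfl | hn
    · exact ⟨φ, by simp⟩
    obtain ⟨ψ, hψ⟩ := ih hn
    exact ⟨pairing (ContinuousLinearMap.mul ℝ ℝ) ψ φ, by ext x; simp [hψ, pow_succ]⟩

end SchwartzMap

theorem integral_cube_sub_div_sq (φ : 𝓢(ℝ, ℝ)) (x : ℝ) :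
    ∫ y, (φ x - φ (x + y)) ^ 3 / y ^ 2 =
      Real.pi * (3 * φ x ^ 2 * absDeriv φ x - 3 * φ x * absDeriv (fun t => φ t ^ 2) x +
        absDeriv (fun t => φ t ^ 3) x) := by
  obtain ⟨φ₂, hφ₂⟩ := φ.exists_coe_eq_pow two_ne_zero
  obtain ⟨φ₃, hφ₃⟩ := φ.exists_coe_eq_pow three_ne_zero
  have h₁ := φ.integrable_secondDiff_div_sq x
  have h₂ := φ₂.integrable_secondDiff_div_sq x
  have h₃ := φ₃.integrable_secondDiff_div_sq x
  have hfold : ∀ y, (φ x - φ (x + y)) ^ 3 / y ^ 2 + (φ x - φ (x + -y)) ^ 3 / (-y) ^ 2 =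
      3 * φ x ^ 2 * (secondDiff φ x y / y ^ 2) - 3 * φ x * (secondDiff φ₂ x y / y ^ 2) +
        secondDiff φ₃ x y / y ^ 2 := fun y => by
    simp only [secondDiff, hφ₂, hφ₃, ← sub_eq_add_neg]; ring
  rw [integral_eq_integral_Ioi_add_comp_neg (φ.integrable_pow_sub_div_sq (by norm_num) x)]
  simp_rw [hfold]
  have hA := (h₁.const_mul (3 * φ x ^ 2)).integrableOn (s := Ioi 0)
  have hB := (h₂.const_mul (3 * φ x)).integrableOn (s := Ioi 0)
  have hAB : IntegrableOn (fun y => 3 * φ x ^ 2 * (secondDiff φ x y / y ^ 2) -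
      3 * φ x * (secondDiff φ₂ x y / y ^ 2)) (Ioi 0) := hA.sub hB
  rw [integral_add hAB h₃.integrableOn, integral_sub hA hB, integral_const_mul,
    integral_const_mul, ← hφ₂, ← hφ₃, φ.absDeriv_eq_integral_secondDiff,
    φ₂.absDeriv_eq_integral_secondDiff, φ₃.absDeriv_eq_integral_secondDiff]
  field_simp

/-- Cubic term identity: for a Schwartz function `φ`,
`(1/6π) ∂ₓ ∫ (φ(x) - φ(x+ζ))³/ζ² dζ = (1/2) ∂ₓ{φ²|∂ₓ|φ - φ|∂ₓ|φ² + (1/3)|∂ₓ|φ³}`. -/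
theorem cubic_term_identity (φ : SchwartzMap ℝ ℝ) (x : ℝ) :
    (6 * Real.pi)⁻¹ *
        deriv (fun z => ∫ ζ : ℝ, (φ z - φ (z + ζ)) ^ 3 / ζ ^ 2) x =
      (1 / 2) * deriv (fun y =>
        φ y ^ 2 * absDeriv (⇑φ) y - φ y * absDeriv (fun z => φ z ^ 2) y +
          (1 / 3) * absDeriv (fun z => φ z ^ 3) y) x := by
  have h : (fun z => ∫ ζ : ℝ, (φ z - φ (z + ζ)) ^ 3 / ζ ^ 2) = fun z => 3 * Real.pi *
      (φ z ^ 2 * absDeriv (⇑φ) z - φ z * absDeriv (fun t => φ t ^ 2) z +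
        (1 / 3) * absDeriv (fun t => φ t ^ 3) z) :=
    funext fun z => by rw [integral_cube_sub_div_sq]; ring
  rw [h, deriv_const_mul_field]
  field_simp
  ring
end
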